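/- Let q ∈ [1,2]. If α ≤ 0, then every minimizer of λ(α,q) has constant sign on (−1,1) (it does not change sign). Moreover, λ(α,q) → −∞ as α → −∞. -/

import Mathlib

open MeasureTheory Real Filter

noncomputable section

/-- `u ∈ H¹₀(-1,1)` with (weak) derivative `g`: `u` is absolutely continuous on `[-1,1]`
(being the indefinite integral of the integrable function `g`), vanishes at both endpoints,
and `g ∈ L²(-1,1)`. -/
def IsH10 (u g : ℝ → ℝ) : Prop :=
  IntervalIntegrable g volume (-1) 1 ∧
  MemLp g 2 (volume.restrict (Set.Ioo (-1 : ℝ) 1)) ∧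
  (∀ x ∈ Set.Icc (-1 : ℝ) 1, u x = ∫ t in (-1 : ℝ)..x, g t) ∧
  u 1 = 0

/-- `u` is not identically zero on `[-1,1]`. -/
def Nontriv (u : ℝ → ℝ) : Prop := ∃ x ∈ Set.Icc (-1 : ℝ) 1, u x ≠ 0

/-- The Rayleigh-type quotient `Q[u,α]` (with `g = u'`). -/
def Qfun (α q : ℝ) (u g : ℝ → ℝ) : ℝ :=
  ((∫ x in (-1 : ℝ)..1, (g x) ^ 2) +
      α * |∫ x in (-1 : ℝ)..1, |u x| ^ (q - 1) * u x| ^ (2 / q)) /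
    ∫ x in (-1 : ℝ)..1, (u x) ^ 2

/-- `λ(α,q) = inf { Q[u,α] : u ∈ H¹₀(-1,1), u ≢ 0 }`. -/
def lam (α q : ℝ) : ℝ :=
  sInf {v : ℝ | ∃ u g : ℝ → ℝ, IsH10 u g ∧ Nontriv u ∧ Qfun α q u g = v}

/-- `u` (with derivative `g`) is a minimizer for `λ(α,q)`. -/
def IsMinimizer (α q : ℝ) (u g : ℝ → ℝ) : Prop :=
  IsH10 u g ∧ Nontriv u ∧ Qfun α q u g = lam α q

/-- The critical value `α_q = sup { α : λ(α,q) < π² }`. -/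
def alphaCrit (q : ℝ) : ℝ := sSup {α : ℝ | lam α q < π ^ 2}

/-!
`λ(α,q)` is finite: by Young's inequality `|∫ |u|^(q-1) u|^(2/q) ≤ 2^(2/q-1) ∫ u²`, so `Q[u,α]` is
bounded below. Testing with `cos (π x / 2)` gives `λ(α,q) ≤ π²/4 + α J` with `J > 0`, whence
`λ(α,q) → -∞`.

For `α < 0`, suppose a minimizer `u` changes sign. Flipping the sign of `u` on a nodal interval
where `u` has the sign opposite to that of `∫ |u|^(q-1) u` keeps `∫ u'²` and `∫ u²` but strictly
increases `|∫ |u|^(q-1) u|`, hence strictly decreases `Q[u,α]`, which is impossible.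

For `α = 0` the first variation gives `∫ u' h' = λ ∫ u h` for all test functions; integration by
parts and the du Bois-Reymond lemma make `u` a `C²` solution of `u'' = -λ u` with `u(-1) = 0`, and
conservation of `u'² + λ u²` gives `u = A sin (√λ (x + 1))` (or `A (x + 1)` if `λ = 0`).
As `λ(0,q) ≤ π²/4`, the argument `√λ (x + 1)` stays in `[0, π]`, so `u` has one sign.
-/

section

open Set

def signedPow (q y : ℝ) : ℝ := |y| ^ (q - 1) * y

lemma continuous_signedPow {q : ℝ} (hq : 1 ≤ q) : Continuous (signedPow q) :=
  ((continuous_rpow_const (by linarith)).comp continuous_abs).mul continuous_id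

lemma abs_signedPow {q : ℝ} (hq : q ≠ 0) (y : ℝ) : |signedPow q y| = |y| ^ q := by
  rcases eq_or_ne y 0 with rfl | hy
  · simp [signedPow, zero_rpow hq]
  · rw [signedPow, abs_mul, abs_of_nonneg (rpow_nonneg (abs_nonneg y) _),
      ← rpow_add_one (abs_ne_zero.2 hy), sub_add_cancel]

lemma signedPow_neg (q y : ℝ) : signedPow q (-y) = -signedPow q y := by
  simp [signedPow]

lemma signedPow_pos {q y : ℝ} (hy : 0 < y) : 0 < signedPow q y :=
  mul_pos (rpow_pos_of_pos (abs_pos.2 hy.ne') _) hy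

lemma signedPow_neg_of_neg {q y : ℝ} (hy : y < 0) : signedPow q y < 0 := by
  simpa [signedPow_neg] using signedPow_pos (q := q) (neg_pos.2 hy)

lemma Qfun_eq_signedPow (α q : ℝ) (u g : ℝ → ℝ) :
    Qfun α q u g = ((∫ x in (-1 : ℝ)..1, (g x) ^ 2) +
      α * |∫ x in (-1 : ℝ)..1, signedPow q (u x)| ^ (2 / q)) / ∫ x in (-1 : ℝ)..1, (u x) ^ 2 :=
  rfl

lemma intervalIntegrable_of_mem_Icc {f : ℝ → ℝ} {a b c d : ℝ}
    (hf : IntervalIntegrable f volume a b) (hc : c ∈ Icc a b) (hd : d ∈ Icc a b) :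
    IntervalIntegrable f volume c d :=
  hf.mono_set (uIcc_subset_uIcc (Icc_subset_uIcc hc) (Icc_subset_uIcc hd))

namespace IsH10

variable {u g : ℝ → ℝ}

lemma apply_neg_one (h : IsH10 u g) : u (-1) = 0 := by
  simpa using h.2.2.1 (-1) (by norm_num)

lemma integral_eq_sub (h : IsH10 u g) {a b : ℝ} (ha : a ∈ Icc (-1 : ℝ) 1)
    (hb : b ∈ Icc (-1 : ℝ) 1) : ∫ t in a..b, g t = u b - u a := by
  rw [h.2.2.1 a ha, h.2.2.1 b hb, intervalIntegral.integral_interval_sub_left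
    (intervalIntegrable_of_mem_Icc h.1 (by norm_num) hb)
    (intervalIntegrable_of_mem_Icc h.1 (by norm_num) ha)]

lemma continuousOn (h : IsH10 u g) : ContinuousOn u (Icc (-1 : ℝ) 1) := by
  have := intervalIntegral.continuousOn_primitive_interval
    ((intervalIntegrable_iff' (μ := volume)).1 h.1)
  rw [uIcc_of_le (by norm_num : (-1 : ℝ) ≤ 1)] at this
  exact this.congr h.2.2.1

lemma integral_sq_pos (h : IsH10 u g) (hnt : Nontriv u) :
    0 < ∫ x in (-1 : ℝ)..1, (u x) ^ 2 := by
  obtain ⟨x, hx, hux⟩ := hnt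
  have hxI : x ∈ Ioo (-1 : ℝ) 1 := by
    refine ⟨hx.1.lt_of_ne ?_, hx.2.lt_of_ne ?_⟩ <;> rintro rfl
    exacts [hux h.apply_neg_one, hux h.2.2.2]
  set S := Ioo (-1 : ℝ) 1 ∩ u ⁻¹' {0}ᶜ
  have hS : IsOpen S :=
    (h.continuousOn.mono Ioo_subset_Icc_self).isOpen_inter_preimage isOpen_Ioo
      isClosed_singleton.isOpen_compl
  have hSsub : S ⊆ Function.support (fun x => (u x) ^ 2) ∩ Ioc (-1) 1 :=
    fun y hy => ⟨pow_ne_zero 2 hy.2, Ioo_subset_Ioc_self hy.1⟩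
  rw [intervalIntegral.integral_pos_iff_support_of_nonneg_ae (ae_of_all _ fun y => sq_nonneg (u y))
    ((h.continuousOn.pow 2).intervalIntegrable_of_Icc (by norm_num))]
  exact ⟨by norm_num, (hS.measure_pos volume ⟨x, hxI, hux⟩).trans_le (measure_mono hSsub)⟩

end IsH10

lemma abs_rpow_le_of_le_two {q K : ℝ} (hq0 : 0 ≤ q) (hq2 : q ≤ 2) (hK : 0 < K) (y : ℝ) :
    |y| ^ q ≤ (q / 2 * y ^ 2 + (1 - q / 2) * K) * K ^ (q / 2 - 1) := by
  have hamgm := geom_mean_le_arith_mean2_weighted (w₁ := q / 2) (w₂ := 1 - q / 2)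
    (by linarith) (by linarith) (sq_nonneg y) hK.le (by ring)
  have hy : |y| ^ q = (y ^ 2) ^ (q / 2) := by
    rw [← sq_abs, ← rpow_natCast, ← rpow_mul (abs_nonneg y)]
    ring_nf
  have hK1 : K ^ (1 - q / 2) * K ^ (q / 2 - 1) = 1 := by
    rw [← rpow_add hK]; norm_num
  calc |y| ^ q = (y ^ 2) ^ (q / 2) * K ^ (1 - q / 2) * K ^ (q / 2 - 1) := by
        rw [hy, mul_assoc, hK1, mul_one]
    _ ≤ _ := mul_le_mul_of_nonneg_right hamgm (rpow_nonneg hK.le _)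

lemma integral_abs_rpow_le {q : ℝ} (hq : q ∈ Icc (0 : ℝ) 2) {f : ℝ → ℝ}
    (hf : ContinuousOn f (Icc (-1 : ℝ) 1)) (hC : 0 < ∫ x in (-1 : ℝ)..1, (f x) ^ 2) :
    ∫ x in (-1 : ℝ)..1, |f x| ^ q ≤ 2 * ((∫ x in (-1 : ℝ)..1, (f x) ^ 2) / 2) ^ (q / 2) := by
  set C := ∫ x in (-1 : ℝ)..1, (f x) ^ 2
  have hK : 0 < C / 2 := by positivity
  have hf2 : IntervalIntegrable (fun x => (f x) ^ 2) volume (-1) 1 :=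
    (hf.pow 2).intervalIntegrable_of_Icc (by norm_num)
  have hfq : IntervalIntegrable (fun x => |f x| ^ q) volume (-1) 1 :=
    (((continuous_rpow_const hq.1).comp continuous_abs).comp_continuousOn
      hf).intervalIntegrable_of_Icc (by norm_num)
  calc ∫ x in (-1 : ℝ)..1, |f x| ^ q
      ≤ ∫ x in (-1 : ℝ)..1, (q / 2 * (f x) ^ 2 + (1 - q / 2) * (C / 2)) * (C / 2) ^ (q / 2 - 1) :=
        intervalIntegral.integral_mono_on (by norm_num) hfq
          (((hf2.const_mul _).add intervalIntegrable_const).mul_const _)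
          fun x _ => abs_rpow_le_of_le_two hq.1 hq.2 hK (f x)
    _ = 2 * (C / 2) * (C / 2) ^ (q / 2 - 1) := by
        rw [intervalIntegral.integral_mul_const,
          intervalIntegral.integral_add (hf2.const_mul _) intervalIntegrable_const,
          intervalIntegral.integral_const_mul, intervalIntegral.integral_const]
        change (q / 2 * C + _) * _ = _
        rw [smul_eq_mul]
        congr 1
        ring
    _ = 2 * (C / 2) ^ (q / 2) := by
        rw [rpow_sub_one hK.ne']
        field_simp

lemma abs_integral_signedPow_rpow_le {q : ℝ} (hq : q ∈ Ioc (0 : ℝ) 2) {f : ℝ → ℝ}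
    (hf : ContinuousOn f (Icc (-1 : ℝ) 1)) (hC : 0 < ∫ x in (-1 : ℝ)..1, (f x) ^ 2) :
    |∫ x in (-1 : ℝ)..1, signedPow q (f x)| ^ (2 / q)
      ≤ 2 ^ (2 / q - 1) * ∫ x in (-1 : ℝ)..1, (f x) ^ 2 := by
  set C := ∫ x in (-1 : ℝ)..1, (f x) ^ 2
  have hq0 : 0 < q := hq.1
  have hK : 0 < C / 2 := by positivity
  have habs : |∫ x in (-1 : ℝ)..1, signedPow q (f x)| ≤ 2 * (C / 2) ^ (q / 2) :=
    calc |∫ x in (-1 : ℝ)..1, signedPow q (f x)|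
        ≤ ∫ x in (-1 : ℝ)..1, |signedPow q (f x)| :=
          intervalIntegral.abs_integral_le_integral_abs (by norm_num)
      _ = ∫ x in (-1 : ℝ)..1, |f x| ^ q := by simp_rw [abs_signedPow hq0.ne']
      _ ≤ _ := integral_abs_rpow_le (Ioc_subset_Icc_self hq) hf hC
  calc |∫ x in (-1 : ℝ)..1, signedPow q (f x)| ^ (2 / q)
      ≤ (2 * (C / 2) ^ (q / 2)) ^ (2 / q) := by gcongr
    _ = 2 ^ (2 / q) * (C / 2) := by
        rw [mul_rpow (by norm_num) (rpow_nonneg hK.le _), ← rpow_mul hK.le,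
          show q / 2 * (2 / q) = 1 by field_simp, rpow_one]
    _ = 2 ^ (2 / q - 1) * C := by
        rw [rpow_sub two_pos, rpow_one]
        ring

lemma neg_le_Qfun {α q : ℝ} (hq : q ∈ Ioc (0 : ℝ) 2) {u g : ℝ → ℝ} (h : IsH10 u g)
    (hnt : Nontriv u) : -(|α| * 2 ^ (2 / q - 1)) ≤ Qfun α q u g := by
  have hC := h.integral_sq_pos hnt
  have hD : 0 ≤ ∫ x in (-1 : ℝ)..1, (g x) ^ 2 :=
    intervalIntegral.integral_nonneg (by norm_num) fun x _ => sq_nonneg _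
  have hT := abs_integral_signedPow_rpow_le hq h.continuousOn hC
  have hT0 : 0 ≤ |∫ x in (-1 : ℝ)..1, signedPow q (u x)| ^ (2 / q) := by positivity
  rw [Qfun_eq_signedPow, le_div_iff₀ hC]
  nlinarith [neg_abs_le α, abs_nonneg α]

lemma bddBelow_Qfun (α : ℝ) {q : ℝ} (hq : q ∈ Ioc (0 : ℝ) 2) :
    BddBelow {v : ℝ | ∃ u g : ℝ → ℝ, IsH10 u g ∧ Nontriv u ∧ Qfun α q u g = v} := by
  refine ⟨-(|α| * 2 ^ (2 / q - 1)), ?_⟩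
  rintro v ⟨u, g, h, hnt, rfl⟩
  exact neg_le_Qfun hq h hnt

lemma lam_le_Qfun (α : ℝ) {q : ℝ} (hq : q ∈ Ioc (0 : ℝ) 2) {u g : ℝ → ℝ} (h : IsH10 u g)
    (hnt : Nontriv u) : lam α q ≤ Qfun α q u g :=
  csInf_le (bddBelow_Qfun α hq) ⟨u, g, h, hnt, rfl⟩

lemma ContinuousOn.memLp_Ioo {f : ℝ → ℝ} {a b : ℝ} {p : ENNReal}
    (hf : ContinuousOn f (Icc a b)) : MemLp f p (volume.restrict (Ioo a b)) := by
  obtain ⟨M, hM⟩ := isCompact_Icc.exists_bound_of_continuousOn hf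
  refine MemLp.of_bound ((hf.mono Ioo_subset_Icc_self).aestronglyMeasurable measurableSet_Ioo) M ?_
  exact (ae_restrict_iff' measurableSet_Ioo).2
    (ae_of_all _ fun x hx => hM x (Ioo_subset_Icc_self hx))

lemma isH10_cos : IsH10 (fun x => cos (π / 2 * x)) (fun x => -(π / 2 * sin (π / 2 * x))) := by
  have hderiv (x : ℝ) :
      HasDerivAt (fun x => cos (π / 2 * x)) (-(π / 2 * sin (π / 2 * x))) x := by
    simpa [mul_comm] using ((hasDerivAt_id x).const_mul (π / 2)).cos
  have hcont : Continuous fun x => -(π / 2 * sin (π / 2 * x)) := by fun_prop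
  refine ⟨hcont.intervalIntegrable _ _, hcont.continuousOn.memLp_Ioo, fun x _ => ?_, ?_⟩
  · rw [intervalIntegral.integral_eq_sub_of_hasDerivAt (fun t _ => hderiv t)
      (hcont.intervalIntegrable _ _)]
    simp
  · simp

lemma nontriv_cos : Nontriv fun x => cos (π / 2 * x) :=
  ⟨0, by norm_num, by simp⟩

lemma integral_cos_sq_pi_div_two : ∫ x in (-1 : ℝ)..1, (cos (π / 2 * x)) ^ 2 = 1 := by
  rw [intervalIntegral.integral_comp_mul_left (fun x => cos x ^ 2) (by positivity),
    integral_cos_sq]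
  simp [pi_ne_zero]

lemma integral_deriv_cos_sq_pi_div_two :
    ∫ x in (-1 : ℝ)..1, (-(π / 2 * sin (π / 2 * x))) ^ 2 = π ^ 2 / 4 := by
  simp_rw [neg_sq, mul_pow]
  rw [intervalIntegral.integral_const_mul,
    intervalIntegral.integral_comp_mul_left (fun x => sin x ^ 2) (by positivity), integral_sin_sq]
  simp [pi_ne_zero]
  field_simp
  norm_num

lemma exists_lam_le_add_mul {q : ℝ} (hq : q ∈ Icc (1 : ℝ) 2) :
    ∃ J : ℝ, 0 < J ∧ ∀ α : ℝ, lam α q ≤ π ^ 2 / 4 + α * J := by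
  set I := ∫ x in (-1 : ℝ)..1, signedPow q (cos (π / 2 * x))
  have hI : 0 < I := by
    refine intervalIntegral.intervalIntegral_pos_of_pos_on
      (((continuous_signedPow hq.1).comp (by fun_prop)).intervalIntegrable _ _)
      (fun x hx => signedPow_pos (cos_pos_of_mem_Ioo ⟨?_, ?_⟩)) (by norm_num)
    · nlinarith [hx.1, pi_pos]
    · nlinarith [hx.2, pi_pos]
  refine ⟨I ^ (2 / q), by positivity, fun α => ?_⟩
  have h := lam_le_Qfun α (Icc_subset_Ioc one_pos le_rfl hq) isH10_cos nontriv_cos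
  rwa [Qfun_eq_signedPow, integral_cos_sq_pi_div_two, integral_deriv_cos_sq_pi_div_two,
    abs_of_pos hI, div_one] at h

lemma tendsto_lam_atBot {q : ℝ} (hq : q ∈ Icc (1 : ℝ) 2) :
    Tendsto (fun α => lam α q) atBot atBot := by
  obtain ⟨J, hJ, hle⟩ := exists_lam_le_add_mul hq
  exact tendsto_atBot_mono hle
    (tendsto_atBot_add_const_left _ _ (tendsto_id.atBot_mul_const hJ))

lemma exists_last_zero {f : ℝ → ℝ} {a p : ℝ} (hap : a ≤ p) (hf : ContinuousOn f (Icc a p))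
    (ha : f a = 0) (hp : f p < 0) : ∃ c ∈ Ico a p, f c = 0 ∧ ∀ x ∈ Ioc c p, f x < 0 := by
  set Z := Icc a p ∩ f ⁻¹' {0}
  have hZ : IsClosed Z := hf.preimage_isClosed_of_isClosed isClosed_Icc isClosed_singleton
  have hZbdd : BddAbove Z := ⟨p, fun x hx => hx.1.2⟩
  obtain ⟨⟨hac, hcp⟩, hc⟩ := hZ.csSup_mem ⟨a, ⟨le_rfl, hap⟩, ha⟩ hZbdd
  refine ⟨sSup Z, ⟨hac, hcp.lt_of_ne fun h => by simp_all⟩, hc, fun x hx => ?_⟩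
  by_contra! hfx
  obtain ⟨z, hz, hz0⟩ := intermediate_value_Icc' hx.2 (hf.mono (Icc_subset_Icc
    (hac.trans hx.1.le) le_rfl)) ⟨hp.le, hfx⟩
  have : z ≤ sSup Z := le_csSup hZbdd ⟨⟨hac.trans (hx.1.le.trans hz.1), hz.2⟩, hz0⟩
  linarith [hx.1, hz.1]

lemma exists_first_zero {f : ℝ → ℝ} {p b : ℝ} (hpb : p ≤ b) (hf : ContinuousOn f (Icc p b))
    (hb : f b = 0) (hp : f p < 0) : ∃ c ∈ Ioc p b, f c = 0 ∧ ∀ x ∈ Ico p c, f x < 0 := by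
  obtain ⟨c, ⟨hbc, hcp⟩, hc, hneg⟩ := exists_last_zero (f := fun x => f (-x)) (neg_le_neg hpb)
    (hf.comp continuousOn_neg fun x hx => ⟨le_neg.1 hx.2, neg_le.1 hx.1⟩) (by simpa) (by simpa)
  refine ⟨-c, ⟨lt_neg.2 hcp, neg_le.1 hbc⟩, hc, fun x hx => ?_⟩
  simpa using hneg (-x) ⟨lt_neg.2 hx.2, neg_le_neg hx.1⟩

lemma exists_nodal_interval {f : ℝ → ℝ} {a b p : ℝ} (hf : ContinuousOn f (Icc a b))
    (ha : f a = 0) (hb : f b = 0) (hp : p ∈ Icc a b) (hfp : f p < 0) :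
    ∃ c₁ c₂, a ≤ c₁ ∧ c₁ < c₂ ∧ c₂ ≤ b ∧ f c₁ = 0 ∧ f c₂ = 0 ∧ ∀ x ∈ Ioo c₁ c₂, f x < 0 := by
  obtain ⟨c₁, ⟨hac₁, hc₁p⟩, hc₁, hneg₁⟩ :=
    exists_last_zero hp.1 (hf.mono (Icc_subset_Icc le_rfl hp.2)) ha hfp
  obtain ⟨c₂, ⟨hpc₂, hc₂b⟩, hc₂, hneg₂⟩ :=
    exists_first_zero hp.2 (hf.mono (Icc_subset_Icc hp.1 le_rfl)) hb hfp
  refine ⟨c₁, c₂, hac₁, hc₁p.trans hpc₂, hc₂b, hc₁, hc₂, fun x hx => ?_⟩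
  rcases le_total x p with hxp | hpx
  exacts [hneg₁ x ⟨hx.1, hxp⟩, hneg₂ x ⟨hpx, hx.2⟩]

section Reflection

variable {c₁ c₂ : ℝ}

lemma piecewise_neg_eq_sub_indicator (s : Set ℝ) [DecidablePred (· ∈ s)] (f : ℝ → ℝ) :
    s.piecewise (-f) f = fun x => f x - 2 * s.indicator f x := by
  ext x
  by_cases hx : x ∈ s <;> simp [hx]; ring

lemma sq_piecewise_neg (s : Set ℝ) [DecidablePred (· ∈ s)] (f : ℝ → ℝ) (x : ℝ) :
    (s.piecewise (-f) f x) ^ 2 = (f x) ^ 2 := by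
  by_cases hx : x ∈ s <;> simp [hx]

lemma signedPow_piecewise_neg (q : ℝ) (s : Set ℝ) [DecidablePred (· ∈ s)] (f : ℝ → ℝ) (x : ℝ) :
    signedPow q (s.piecewise (-f) f x)
      = s.piecewise (-fun y => signedPow q (f y)) (fun y => signedPow q (f y)) x := by
  by_cases hx : x ∈ s <;> simp [hx, signedPow_neg]

lemma IntervalIntegrable.indicator {f : ℝ → ℝ} {a b : ℝ} {s : Set ℝ}
    (hf : IntervalIntegrable f volume a b) (hs : MeasurableSet s) :
    IntervalIntegrable (s.indicator f) volume a b := by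
  rw [intervalIntegrable_iff] at hf ⊢
  exact hf.indicator hs

lemma integral_piecewise_Ioc_neg {f : ℝ → ℝ} {a b : ℝ} (hab : a ≤ b)
    (hf : IntervalIntegrable f volume a b) (hac₁ : a ≤ c₁) (hc : c₁ ≤ c₂) :
    ∫ x in a..b, (Ioc c₁ c₂).piecewise (-f) f x
      = (∫ x in a..b, f x) - 2 * ∫ x in min b c₁..min b c₂, f x := by
  have hind : ∫ x in a..b, (Ioc c₁ c₂).indicator f x = ∫ x in min b c₁..min b c₂, f x := by
    have hset : Ioc c₁ c₂ ∩ Ioc a b = Ioc (min b c₁) (min b c₂) := by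
      ext x
      simp only [mem_inter_iff, mem_Ioc, min_lt_iff, le_min_iff]
      constructor
      · rintro ⟨⟨h1, h2⟩, -, h4⟩
        exact ⟨Or.inr h1, h4, h2⟩
      · rintro ⟨h1 | h1, h2, h3⟩
        · exact absurd h2 (not_le.2 h1)
        · exact ⟨⟨h1, h3⟩, hac₁.trans_lt h1, h2⟩
    rw [intervalIntegral.integral_of_le hab, integral_indicator measurableSet_Ioc,
      Measure.restrict_restrict measurableSet_Ioc, hset,
      intervalIntegral.integral_of_le (min_le_min_left b hc)]
  rw [piecewise_neg_eq_sub_indicator,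
    intervalIntegral.integral_sub hf ((hf.indicator measurableSet_Ioc).const_mul 2),
    intervalIntegral.integral_const_mul, hind]

lemma IsH10.piecewise_neg {u g : ℝ → ℝ} (h : IsH10 u g) (h₁ : -1 ≤ c₁) (hc : c₁ ≤ c₂)
    (hu₁ : u c₁ = 0) (hu₂ : u c₂ = 0) :
    IsH10 ((Ioc c₁ c₂).piecewise (-u) u) ((Ioc c₁ c₂).piecewise (-g) g) := by
  refine ⟨?_, ?_, fun x hx => ?_, by simp [Set.piecewise, h.2.2.2]⟩
  · rw [piecewise_neg_eq_sub_indicator]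
    exact h.1.sub ((h.1.indicator measurableSet_Ioc).const_mul 2)
  · rw [piecewise_neg_eq_sub_indicator]
    exact h.2.1.sub ((h.2.1.indicator measurableSet_Ioc).const_mul 2)
  have hmin {c : ℝ} (hc : -1 ≤ c) : min x c ∈ Icc (-1 : ℝ) 1 :=
    ⟨le_min hx.1 hc, (min_le_left _ _).trans hx.2⟩
  rw [integral_piecewise_Ioc_neg hx.1 (intervalIntegrable_of_mem_Icc h.1 (by norm_num) hx)
    h₁ hc, h.integral_eq_sub (hmin h₁) (hmin (h₁.trans hc)), ← h.2.2.1 x hx]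
  rcases le_or_gt x c₁ with hx₁ | hx₁
  · simp [hx₁, hx₁.trans hc, not_lt.2 hx₁]
  rcases le_or_gt x c₂ with hx₂ | hx₂
  · simp [hx₁, hx₂, hx₁.le, hu₁]; ring
  · simp [hx₁.le, hx₂.le, hu₁, hu₂, not_le.2 hx₂]

end Reflection

lemma IsH10.neg {u g : ℝ → ℝ} (h : IsH10 u g) : IsH10 (-u) (-g) :=
  ⟨h.1.neg, h.2.1.neg, fun x hx => by simp [h.2.2.1 x hx, intervalIntegral.integral_neg],
    by simp [h.2.2.2]⟩

lemma Qfun_neg (α q : ℝ) (u g : ℝ → ℝ) : Qfun α q (-u) (-g) = Qfun α q u g := by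
  simp [Qfun_eq_signedPow, signedPow_neg, intervalIntegral.integral_neg]

lemma IsMinimizer.neg {α q : ℝ} {u g : ℝ → ℝ} (h : IsMinimizer α q u g) :
    IsMinimizer α q (-u) (-g) := by
  obtain ⟨h10, ⟨x, hx, hux⟩, hQ⟩ := h
  exact ⟨h10.neg, ⟨x, hx, neg_ne_zero.2 hux⟩, (Qfun_neg α q u g).trans hQ⟩

lemma Qfun_piecewise_neg (α : ℝ) {q : ℝ} (hq : 1 ≤ q) {u g : ℝ → ℝ} (h : IsH10 u g)
    {c₁ c₂ : ℝ} (h₁ : -1 ≤ c₁) (hc : c₁ ≤ c₂) (h₂ : c₂ ≤ 1) :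
    Qfun α q ((Ioc c₁ c₂).piecewise (-u) u) ((Ioc c₁ c₂).piecewise (-g) g)
      = ((∫ x in (-1 : ℝ)..1, (g x) ^ 2) + α * |(∫ x in (-1 : ℝ)..1, signedPow q (u x))
          - 2 * ∫ x in c₁..c₂, signedPow q (u x)| ^ (2 / q)) / ∫ x in (-1 : ℝ)..1, (u x) ^ 2 := by
  have hφ : IntervalIntegrable (fun x => signedPow q (u x)) volume (-1) 1 :=
    ((continuous_signedPow hq).comp_continuousOn h.continuousOn).intervalIntegrable_of_Icc
      (by norm_num)
  simp only [Qfun_eq_signedPow, sq_piecewise_neg, signedPow_piecewise_neg]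
  rw [integral_piecewise_Ioc_neg (by norm_num) hφ h₁ hc, min_eq_right (hc.trans h₂),
    min_eq_right h₂]

lemma IsMinimizer.nonneg_of_neg_of_integral_nonneg {α q : ℝ} (hq : q ∈ Icc (1 : ℝ) 2)
    (hα : α < 0) {u g : ℝ → ℝ} (hmin : IsMinimizer α q u g)
    (hI : 0 ≤ ∫ x in (-1 : ℝ)..1, signedPow q (u x)) : ∀ x ∈ Icc (-1 : ℝ) 1, 0 ≤ u x := by
  obtain ⟨h10, hnt, hQ⟩ := hmin
  intro p hp
  by_contra! hup
  obtain ⟨c₁, c₂, h₁, hc, h₂, hu₁, hu₂, hneg⟩ :=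
    exists_nodal_interval h10.continuousOn h10.apply_neg_one h10.2.2.2 hp hup
  have hJ : ∫ x in c₁..c₂, signedPow q (u x) < 0 := by
    have := intervalIntegral.intervalIntegral_pos_of_pos_on (f := fun x => -signedPow q (u x))
      (((continuous_signedPow hq.1).comp_continuousOn
        (h10.continuousOn.mono (Icc_subset_Icc h₁ h₂))).neg.intervalIntegrable_of_Icc hc.le)
      (fun x hx => neg_pos.2 (signedPow_neg_of_neg (hneg x hx))) hc
    rwa [intervalIntegral.integral_neg, neg_pos] at this
  have hnt' : Nontriv ((Ioc c₁ c₂).piecewise (-u) u) := by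
    obtain ⟨x, hx, hux⟩ := hnt
    exact ⟨x, hx, fun h0 => hux (by simpa [h0] using (sq_piecewise_neg (Ioc c₁ c₂) u x).symm)⟩
  have hle := lam_le_Qfun α (Icc_subset_Ioc one_pos le_rfl hq)
    (h10.piecewise_neg h₁ hc.le hu₁ hu₂) hnt'
  rw [Qfun_piecewise_neg α hq.1 h10 h₁ hc.le h₂, ← hQ, Qfun_eq_signedPow,
    div_le_div_iff_of_pos_right (h10.integral_sq_pos hnt), add_le_add_iff_left,
    mul_le_mul_left_of_neg hα] at hle
  have hlt : |∫ x in (-1 : ℝ)..1, signedPow q (u x)|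
      < |(∫ x in (-1 : ℝ)..1, signedPow q (u x)) - 2 * ∫ x in c₁..c₂, signedPow q (u x)| := by
    rw [abs_of_nonneg hI, abs_of_pos (by linarith)]
    linarith
  exact (rpow_lt_rpow (abs_nonneg _) hlt (div_pos two_pos (by linarith [hq.1]))).not_ge hle

lemma IsMinimizer.nonneg_or_nonpos_of_neg {α q : ℝ} (hq : q ∈ Icc (1 : ℝ) 2) (hα : α < 0)
    {u g : ℝ → ℝ} (hmin : IsMinimizer α q u g) :
    (∀ x ∈ Icc (-1 : ℝ) 1, 0 ≤ u x) ∨ (∀ x ∈ Icc (-1 : ℝ) 1, u x ≤ 0) := by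
  rcases le_or_gt 0 (∫ x in (-1 : ℝ)..1, signedPow q (u x)) with hI | hI
  · exact Or.inl (hmin.nonneg_of_neg_of_integral_nonneg hq hα hI)
  · refine Or.inr fun x hx => neg_nonneg.1 (hmin.neg.nonneg_of_neg_of_integral_nonneg hq hα ?_ x hx)
    simp [signedPow_neg, intervalIntegral.integral_neg, hI.le]

lemma eq_zero_of_hasDerivAt_of_hasDerivAt_neg_mul {z z' : ℝ → ℝ} {μ a b : ℝ} (hμ : 0 ≤ μ)
    (hz : ∀ x ∈ Icc a b, HasDerivAt z (z' x) x)
    (hz' : ∀ x ∈ Icc a b, HasDerivAt z' (-(μ * z x)) x) (ha : z a = 0) (ha' : z' a = 0) :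
    ∀ x ∈ Icc a b, z x = 0 := by
  have hE (x : ℝ) (hx : x ∈ Icc a b) :
      HasDerivAt (fun y => z' y * z' y + μ * (z y * z y)) 0 x :=
    (((hz' x hx).mul (hz' x hx)).add (((hz x hx).mul (hz x hx)).const_mul μ)).congr_deriv
      (by ring)
  have hEconst := constant_of_has_deriv_right_zero
    (fun x hx => (hE x hx).continuousAt.continuousWithinAt)
    fun x hx => (hE x (Ico_subset_Icc_self hx)).hasDerivWithinAt
  have hz'0 (x : ℝ) (hx : x ∈ Icc a b) : z' x = 0 := by
    have := hEconst x hx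
    simp only [ha, ha', mul_zero, add_zero] at this
    nlinarith [mul_self_nonneg (z' x), mul_nonneg hμ (mul_self_nonneg (z x))]
  intro x hx
  rw [← ha]
  exact constant_of_has_deriv_right_zero (fun y hy => (hz y hy).continuousAt.continuousWithinAt)
    (fun y hy => hz'0 y (Ico_subset_Icc_self hy) ▸ (hz y (Ico_subset_Icc_self hy)).hasDerivWithinAt)
    x hx

lemma eq_mul_sin_of_hasDerivAt {f f' : ℝ → ℝ} {ω a b : ℝ} (hω : ω ≠ 0)
    (hf : ∀ x ∈ Icc a b, HasDerivAt f (f' x) x)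
    (hf' : ∀ x ∈ Icc a b, HasDerivAt f' (-(ω ^ 2 * f x)) x) (ha : f a = 0) :
    ∀ x ∈ Icc a b, f x = f' a / ω * sin (ω * (x - a)) := by
  have hlin (x : ℝ) : HasDerivAt (fun y => ω * (y - a)) ω x := by
    simpa using ((hasDerivAt_id x).sub_const a).const_mul ω
  have hz := eq_zero_of_hasDerivAt_of_hasDerivAt_neg_mul (sq_nonneg ω)
    (z := fun x => f x - f' a / ω * sin (ω * (x - a)))
    (z' := fun x => f' x - f' a * cos (ω * (x - a)))
    (fun x hx => ((hf x hx).sub (((hlin x).sin).const_mul (f' a / ω))).congr_deriv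
      (by field_simp))
    (fun x hx => ((hf' x hx).sub (((hlin x).cos).const_mul (f' a))).congr_deriv
      (by field_simp; ring))
    (by simp [ha]) (by simp)
  exact fun x hx => sub_eq_zero.1 (hz x hx)

lemma eq_mul_sub_of_hasDerivAt {f f' : ℝ → ℝ} {a b : ℝ}
    (hf : ∀ x ∈ Icc a b, HasDerivAt f (f' x) x) (hf' : ∀ x ∈ Icc a b, HasDerivAt f' 0 x)
    (ha : f a = 0) : ∀ x ∈ Icc a b, f x = f' a * (x - a) := by
  have hz := eq_zero_of_hasDerivAt_of_hasDerivAt_neg_mul le_rfl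
    (z := fun x => f x - f' a * (x - a)) (z' := fun x => f' x - f' a)
    (fun x hx => ((hf x hx).sub (((hasDerivAt_id x).sub_const a).const_mul (f' a))).congr_deriv
      (by simp))
    (fun x hx => ((hf' x hx).sub_const (f' a)).congr_deriv (by simp))
    (by simp [ha]) (by simp)
  exact fun x hx => sub_eq_zero.1 (hz x hx)

lemma MeasureTheory.MemLp.intervalIntegrable_mul {f k : ℝ → ℝ} {a b : ℝ} (hab : a ≤ b)
    (hf : MemLp f 2 (volume.restrict (Ioo a b))) (hk : MemLp k 2 (volume.restrict (Ioo a b))) :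
    IntervalIntegrable (fun x => f x * k x) volume a b :=
  (intervalIntegrable_iff_integrableOn_Ioo_of_le hab).2 (hf.integrable_mul hk)

lemma nontriv_of_integral_sq_ne_zero {f : ℝ → ℝ} (hf : ∫ x in (-1 : ℝ)..1, (f x) ^ 2 ≠ 0) :
    Nontriv f := by
  by_contra h
  simp only [Nontriv, not_exists, not_and, not_not] at h
  refine hf ?_
  rw [intervalIntegral.integral_congr (g := fun _ => 0) fun x hx => by
    simp [h x (uIcc_of_le (by norm_num : (-1 : ℝ) ≤ 1) ▸ hx)]]
  simp

lemma IsH10.add_mul {u g w h : ℝ → ℝ} (hu : IsH10 u g) (hw : IsH10 w h) (t : ℝ) :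
    IsH10 (fun x => u x + t * w x) (fun x => g x + t * h x) := by
  refine ⟨hu.1.add (hw.1.const_mul t), hu.2.1.add (hw.2.1.const_mul t), fun x hx => ?_,
    by simp [hu.2.2.2, hw.2.2.2]⟩
  rw [intervalIntegral.integral_add (intervalIntegrable_of_mem_Icc hu.1 (by norm_num) hx)
    ((intervalIntegrable_of_mem_Icc hw.1 (by norm_num) hx).const_mul t),
    intervalIntegral.integral_const_mul, ← hu.2.2.1 x hx, ← hw.2.2.1 x hx]

lemma Qfun_zero (q : ℝ) (u g : ℝ → ℝ) :
    Qfun 0 q u g = (∫ x in (-1 : ℝ)..1, (g x) ^ 2) / ∫ x in (-1 : ℝ)..1, (u x) ^ 2 := by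
  simp [Qfun]

lemma integral_add_mul_sq {f k : ℝ → ℝ} {a b : ℝ} (t : ℝ)
    (hf : IntervalIntegrable (fun x => (f x) ^ 2) volume a b)
    (hk : IntervalIntegrable (fun x => (k x) ^ 2) volume a b)
    (hfk : IntervalIntegrable (fun x => f x * k x) volume a b) :
    ∫ x in a..b, (f x + t * k x) ^ 2
      = (∫ x in a..b, (f x) ^ 2) + 2 * t * (∫ x in a..b, f x * k x)
        + t ^ 2 * ∫ x in a..b, (k x) ^ 2 := by
  have hexp (x : ℝ) :
      (f x + t * k x) ^ 2 = (f x) ^ 2 + 2 * t * (f x * k x) + t ^ 2 * (k x) ^ 2 := by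
    ring
  simp_rw [hexp]
  rw [intervalIntegral.integral_add (hf.add (hfk.const_mul _)) (hk.const_mul _),
    intervalIntegral.integral_add hf (hfk.const_mul _), intervalIntegral.integral_const_mul,
    intervalIntegral.integral_const_mul]

lemma IsMinimizer.euler_lagrange {q : ℝ} (hq : q ∈ Ioc (0 : ℝ) 2) {u g w h : ℝ → ℝ}
    (hmin : IsMinimizer 0 q u g) (hw : IsH10 w h) :
    (∫ x in (-1 : ℝ)..1, g x * h x) * (∫ x in (-1 : ℝ)..1, (u x) ^ 2)
      = (∫ x in (-1 : ℝ)..1, (g x) ^ 2) * ∫ x in (-1 : ℝ)..1, u x * w x := by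
  obtain ⟨hu, hnt, hQ⟩ := hmin
  have hC := hu.integral_sq_pos hnt
  set D := ∫ x in (-1 : ℝ)..1, (g x) ^ 2
  set C := ∫ x in (-1 : ℝ)..1, (u x) ^ 2
  set B := ∫ x in (-1 : ℝ)..1, g x * h x
  set E := ∫ x in (-1 : ℝ)..1, u x * w x
  set N : ℝ → ℝ := fun t => D + 2 * t * B + t ^ 2 * ∫ x in (-1 : ℝ)..1, (h x) ^ 2
  set M : ℝ → ℝ := fun t => C + 2 * t * E + t ^ 2 * ∫ x in (-1 : ℝ)..1, (w x) ^ 2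
  have hN (t : ℝ) : ∫ x in (-1 : ℝ)..1, (g x + t * h x) ^ 2 = N t :=
    integral_add_mul_sq t (by simpa [sq] using hu.2.1.intervalIntegrable_mul (by norm_num) hu.2.1)
      (by simpa [sq] using hw.2.1.intervalIntegrable_mul (by norm_num) hw.2.1)
      (hu.2.1.intervalIntegrable_mul (by norm_num) hw.2.1)
  have hM (t : ℝ) : ∫ x in (-1 : ℝ)..1, (u x + t * w x) ^ 2 = M t :=
    integral_add_mul_sq t ((hu.continuousOn.pow 2).intervalIntegrable_of_Icc (by norm_num))
      ((hw.continuousOn.pow 2).intervalIntegrable_of_Icc (by norm_num))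
      ((hu.continuousOn.mul hw.continuousOn).intervalIntegrable_of_Icc (by norm_num))
  have hMpos : ∀ᶠ t in nhds 0, 0 < M t :=
    continuousAt_const.eventually_lt (show Continuous M by fun_prop).continuousAt (by simpa [M])
  have hloc : IsLocalMin (fun t => N t / M t) 0 := by
    filter_upwards [hMpos] with t ht
    have hle := lam_le_Qfun 0 hq (hu.add_mul hw t) (nontriv_of_integral_sq_ne_zero
      (by rw [hM]; exact ht.ne'))
    rw [Qfun_zero, hN, hM, ← hQ, Qfun_zero] at hle
    simpa [N, M] using hle
  have hpoly (a b c : ℝ) : HasDerivAt (fun t : ℝ => a + 2 * t * b + t ^ 2 * c) (2 * b) 0 := by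
    simpa using ((((hasDerivAt_id (0 : ℝ)).const_mul 2).mul_const b).const_add a).fun_add
      ((hasDerivAt_pow 2 (0 : ℝ)).mul_const c)
  have hM0 : M 0 = C := by simp [M]
  have := hloc.hasDerivAt_eq_zero ((hpoly D B _).div (hpoly C E _) (hM0 ▸ hC.ne'))
  rw [hM0] at this
  field_simp at this
  linarith

lemma Continuous.hasDerivAt_intervalIntegral_left {v : ℝ → ℝ} (hv : Continuous v) (b t : ℝ) :
    HasDerivAt (fun t => ∫ s in t..b, v s) (-v t) t :=
  intervalIntegral.integral_hasDerivAt_left (hv.intervalIntegrable _ _)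
    (hv.stronglyMeasurableAtFilter _ _) hv.continuousAt

lemma IsH10.integral_mul_eq_integral_integral_mul {w h v : ℝ → ℝ} (hw : IsH10 w h)
    (hv : Continuous v) :
    ∫ x in (-1 : ℝ)..1, v x * w x = ∫ t in (-1 : ℝ)..1, (∫ s in t..1, v s) * h t := by
  set W := fun x => ∫ t in (-1 : ℝ)..x, h t
  set V := fun t => ∫ s in t..(1 : ℝ), v s
  have hVeq : V = fun t => -∫ s in (1 : ℝ)..t, v s :=
    funext fun t => intervalIntegral.integral_symm _ _
  have hWac : AbsolutelyContinuousOnInterval W (-1) 1 :=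
    hw.1.absolutelyContinuousOnInterval_intervalIntegral (by simp)
  have hVac : AbsolutelyContinuousOnInterval V (-1) 1 := hVeq ▸
    ((hv.intervalIntegrable (-1) 1).absolutelyContinuousOnInterval_intervalIntegral (by simp)).neg
  have hVd (t : ℝ) : deriv V t = -v t := (hv.hasDerivAt_intervalIntegral_left 1 t).deriv
  have hWd : ∀ᵐ x, x ∈ uIoc (-1 : ℝ) 1 → deriv W x = h x := by
    filter_upwards [hw.1.ae_hasDerivAt_integral] with x hx hxI
    exact (hx (uIoc_subset_uIcc hxI) (-1) (by simp)).deriv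
  have hibp := hVac.integral_mul_deriv_eq_deriv_mul hWac
  have hV1 : V 1 = 0 := intervalIntegral.integral_same
  have hW1 : W (-1) = 0 := intervalIntegral.integral_same
  calc ∫ x in (-1 : ℝ)..1, v x * w x = ∫ x in (-1 : ℝ)..1, v x * W x := by
        refine intervalIntegral.integral_congr fun x hx => ?_
        rw [uIcc_of_le (by norm_num : (-1 : ℝ) ≤ 1)] at hx
        simp [W, hw.2.2.1 x hx]
    _ = ∫ t in (-1 : ℝ)..1, V t * deriv W t := by
        rw [hibp, hV1, hW1]
        simp only [hVd, neg_mul, intervalIntegral.integral_neg]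
        ring
    _ = ∫ t in (-1 : ℝ)..1, V t * h t :=
        intervalIntegral.integral_congr_ae (hWd.mono fun x hx hxI => by rw [hx hxI])

lemma exists_ae_eq_const_of_integral_mul_eq_zero {G : ℝ → ℝ}
    (hG : MemLp G 2 (volume.restrict (Ioo (-1 : ℝ) 1)))
    (horth : ∀ w h, IsH10 w h → ∫ x in (-1 : ℝ)..1, G x * h x = 0) :
    ∃ K, ∀ᵐ x ∂(volume.restrict (Ioo (-1 : ℝ) 1)), G x = K := by
  have hG1 : IntervalIntegrable G volume (-1) 1 :=
    (intervalIntegrable_iff_integrableOn_Ioo_of_le (by norm_num)).2 (hG.integrable one_le_two)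
  set K := (∫ x in (-1 : ℝ)..1, G x) / 2
  have hGK : MemLp (fun x => G x - K) 2 (volume.restrict (Ioo (-1 : ℝ) 1)) :=
    hG.sub (memLp_const K)
  have hmean : ∫ x in (-1 : ℝ)..1, (G x - K) = 0 := by
    simp [intervalIntegral.integral_sub hG1 intervalIntegrable_const, K]
    ring
  have hw : IsH10 (fun x => ∫ t in (-1 : ℝ)..x, (G t - K)) (fun x => G x - K) :=
    ⟨hG1.sub intervalIntegrable_const, hGK, fun _ _ => rfl, hmean⟩
  have hsq : ∫ x in (-1 : ℝ)..1, (G x - K) ^ 2 = 0 :=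
    calc ∫ x in (-1 : ℝ)..1, (G x - K) ^ 2
        = (∫ x in (-1 : ℝ)..1, G x * (G x - K)) - ∫ x in (-1 : ℝ)..1, K * (G x - K) := by
          rw [← intervalIntegral.integral_sub (hG.intervalIntegrable_mul (by norm_num) hGK)
            ((hG1.sub intervalIntegrable_const).const_mul K)]
          exact intervalIntegral.integral_congr fun x _ => by ring
      _ = 0 := by rw [horth _ _ hw, intervalIntegral.integral_const_mul, hmean]; ring
  rw [intervalIntegral.integral_of_le (by norm_num), integral_Ioc_eq_integral_Ioo,
    integral_eq_zero_iff_of_nonneg (fun x => sq_nonneg _) hGK.integrable_sq] at hsq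
  exact ⟨K, hsq.mono fun x hx => by simpa [sub_eq_zero] using hx⟩

lemma IsMinimizer.euler_lagrange_integrated {q : ℝ} (hq : q ∈ Ioc (0 : ℝ) 2) {u g v : ℝ → ℝ}
    (hmin : IsMinimizer 0 q u g) (hv : Continuous v) (hvu : ∀ x ∈ Icc (-1 : ℝ) 1, v x = u x)
    {w h : ℝ → ℝ} (hw : IsH10 w h) :
    ∫ x in (-1 : ℝ)..1, (g x - lam 0 q * ∫ s in x..1, v s) * h x = 0 := by
  obtain ⟨hu, hnt, hQ⟩ := id hmin
  have hC := hu.integral_sq_pos hnt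
  set V := fun t => ∫ s in t..(1 : ℝ), v s
  have hVc : Continuous V := continuous_iff_continuousAt.2 fun t =>
    (hv.hasDerivAt_intervalIntegral_left 1 t).continuousAt
  have huw : ∫ x in (-1 : ℝ)..1, u x * w x = ∫ x in (-1 : ℝ)..1, V x * h x := by
    rw [← hw.integral_mul_eq_integral_integral_mul hv]
    refine intervalIntegral.integral_congr fun x hx => ?_
    rw [hvu x (uIcc_of_le (by norm_num : (-1 : ℝ) ≤ 1) ▸ hx)]
  have hgh : ∫ x in (-1 : ℝ)..1, g x * h x = lam 0 q * ∫ x in (-1 : ℝ)..1, V x * h x := by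
    refine mul_right_cancel₀ hC.ne' ?_
    rw [hmin.euler_lagrange hq hw, ← hQ, Qfun_zero, huw]
    field_simp
  rw [intervalIntegral.integral_congr (g := fun x => g x * h x - lam 0 q * (V x * h x))
    fun x _ => by ring,
    intervalIntegral.integral_sub (hu.2.1.intervalIntegrable_mul (by norm_num) hw.2.1)
      ((hw.1.continuousOn_mul hVc.continuousOn).const_mul _),
    intervalIntegral.integral_const_mul, hgh, sub_self]

lemma IsMinimizer.exists_hasDerivAt_of_zero {q : ℝ} (hq : q ∈ Ioc (0 : ℝ) 2) {u g : ℝ → ℝ}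
    (hmin : IsMinimizer 0 q u g) :
    ∃ ψ ψ' : ℝ → ℝ, (∀ x ∈ Icc (-1 : ℝ) 1, u x = ψ x) ∧ (∀ x, HasDerivAt ψ (ψ' x) x) ∧
      ∀ x ∈ Icc (-1 : ℝ) 1, HasDerivAt ψ' (-(lam 0 q * ψ x)) x := by
  have hu := hmin.1
  -- a continuous extension of `u` to `ℝ`, so that `t ↦ ∫ s in t..1, v s` is differentiable
  set v := IccExtend (by norm_num : (-1 : ℝ) ≤ 1) fun x => u x
  have hv : Continuous v :=
    (hu.continuousOn.comp_continuous continuous_subtype_val Subtype.prop).Icc_extend'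
  have hvu (x : ℝ) (hx : x ∈ Icc (-1 : ℝ) 1) : v x = u x := IccExtend_of_mem _ _ hx
  set V := fun t => ∫ s in t..(1 : ℝ), v s
  have hVd := hv.hasDerivAt_intervalIntegral_left 1
  have hVc : Continuous V := continuous_iff_continuousAt.2 fun t => (hVd t).continuousAt
  obtain ⟨K, hK⟩ := exists_ae_eq_const_of_integral_mul_eq_zero
    (hu.2.1.sub (hVc.continuousOn.memLp_Ioo.const_mul (lam 0 q)))
    fun w h hw => hmin.euler_lagrange_integrated hq hv hvu hw
  have huψ (x : ℝ) (hx : x ∈ Icc (-1 : ℝ) 1) :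
      u x = ∫ t in (-1 : ℝ)..x, (K + lam 0 q * V t) := by
    have hK' : ∀ᵐ t, t ∈ Ioc (-1 : ℝ) 1 → g t = K + lam 0 q * V t := by
      rw [Measure.restrict_congr_set Ioo_ae_eq_Ioc, ae_restrict_iff' measurableSet_Ioc] at hK
      filter_upwards [hK] with t ht htI
      linarith [show g t - lam 0 q * V t = K from ht htI]
    rw [hu.2.2.1 x hx]
    refine intervalIntegral.integral_congr_ae (hK'.mono fun t ht htI => ht ?_)
    rw [uIoc_of_le hx.1] at htI
    exact ⟨htI.1, htI.2.trans hx.2⟩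
  have hψ'c : Continuous fun t => K + lam 0 q * V t := by fun_prop
  refine ⟨fun x => ∫ t in (-1 : ℝ)..x, (K + lam 0 q * V t), fun t => K + lam 0 q * V t, huψ,
    fun x => (hψ'c.integral_hasStrictDerivAt _ x).hasDerivAt, fun x hx => ?_⟩
  beta_reduce
  rw [← huψ x hx, ← hvu x hx, ← mul_neg]
  exact ((hVd x).const_mul _).const_add K

lemma nonneg_or_nonpos_of_eq_mul {s : Set ℝ} {f φ : ℝ → ℝ} (A : ℝ) (hφ : ∀ x ∈ s, 0 ≤ φ x)
    (hf : ∀ x ∈ s, f x = A * φ x) : (∀ x ∈ s, 0 ≤ f x) ∨ (∀ x ∈ s, f x ≤ 0) := by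
  rcases le_total 0 A with hA | hA
  · exact Or.inl fun x hx => hf x hx ▸ mul_nonneg hA (hφ x hx)
  · exact Or.inr fun x hx => hf x hx ▸ mul_nonpos_of_nonpos_of_nonneg hA (hφ x hx)

lemma IsMinimizer.nonneg_or_nonpos_of_zero {q : ℝ} (hq : q ∈ Icc (1 : ℝ) 2) {u g : ℝ → ℝ}
    (hmin : IsMinimizer 0 q u g) :
    (∀ x ∈ Icc (-1 : ℝ) 1, 0 ≤ u x) ∨ (∀ x ∈ Icc (-1 : ℝ) 1, u x ≤ 0) := by
  obtain ⟨ψ, ψ', huψ, hψ, hψ'⟩ :=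
    hmin.exists_hasDerivAt_of_zero (Icc_subset_Ioc one_pos le_rfl hq)
  have hψa : ψ (-1) = 0 := huψ (-1) (by norm_num) ▸ hmin.1.apply_neg_one
  have hlam0 : 0 ≤ lam 0 q := by
    rw [← hmin.2.2, Qfun_zero]
    exact div_nonneg (intervalIntegral.integral_nonneg (by norm_num) fun x _ => sq_nonneg _)
      (intervalIntegral.integral_nonneg (by norm_num) fun x _ => sq_nonneg _)
  have hlam : lam 0 q ≤ (π / 2) ^ 2 := by
    obtain ⟨J, -, hJ⟩ := exists_lam_le_add_mul hq
    linarith [hJ 0]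
  rcases hlam0.eq_or_lt with h0 | hpos
  · have hlin := eq_mul_sub_of_hasDerivAt (fun x _ => hψ x)
      (fun x hx => by simpa [← h0] using hψ' x hx) hψa
    refine nonneg_or_nonpos_of_eq_mul (ψ' (-1)) (φ := fun x => x - -1)
      (fun x hx => by linarith [hx.1]) fun x hx => ?_
    rw [huψ x hx, hlin x hx]
  · set ω := √(lam 0 q)
    have hω : 0 < ω := sqrt_pos.2 hpos
    have hωle : ω ≤ π / 2 := sqrt_le_iff.2 ⟨by positivity, hlam⟩
    have hsin := eq_mul_sin_of_hasDerivAt hω.ne' (fun x _ => hψ x)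
      (fun x hx => by simpa [ω, sq_sqrt hlam0] using hψ' x hx) hψa
    refine nonneg_or_nonpos_of_eq_mul (ψ' (-1) / ω) (φ := fun x => sin (ω * (x - -1)))
      (fun x hx => sin_nonneg_of_nonneg_of_le_pi (by nlinarith [hx.1]) (by nlinarith [hx.2]))
      fun x hx => ?_
    rw [huψ x hx, hsin x hx]

end

/-- For `α ≤ 0` the minimizers of `λ(α,q)` do not change sign; moreover
`λ(α,q) → -∞` as `α → -∞`. -/
theorem statement9 (q : ℝ) (hq : q ∈ Set.Icc (1 : ℝ) 2) :
    (∀ α : ℝ, α ≤ 0 → ∀ u g : ℝ → ℝ, IsMinimizer α q u g →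
      ((∀ x ∈ Set.Icc (-1 : ℝ) 1, 0 ≤ u x) ∨ (∀ x ∈ Set.Icc (-1 : ℝ) 1, u x ≤ 0))) ∧
    Tendsto (fun α => lam α q) atBot atBot := by
  refine ⟨fun α hα u g hmin => ?_, tendsto_lam_atBot hq⟩
  rcases hα.lt_or_eq with hα | rfl
  · exact hmin.nonneg_or_nonpos_of_neg hq hα
  · exact hmin.nonneg_or_nonpos_of_zero hq
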